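/- Let X be uniform Bernoulli(1/2), Y the erasure of X with erasure probability p, W a random variable with W−X−Y a Markov chain, and X̂ = f(W) a Boolean-valued function of W with P(X ≠ X̂) ≤ D₁ for some D₁ ≤ 1/2. Then H(Y|W) ≤ h(p) + (1−p)·h(D₁). -/

import Mathlib

open Finset Real
open scoped Classical

noncomputable section

/-- Probability of an event under a finite probability mass function. -/
def pr {Ω : Type} [Fintype Ω] (P : Ω → ℝ) (A : Ω → Prop) : ℝ :=
  ∑ ω, if A ω then P ω else 0

/-- `P` is a probability mass function on the finite type `Ω`. -/
def IsPMF {Ω : Type} [Fintype Ω] (P : Ω → ℝ) : Prop :=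
  (∀ ω, 0 ≤ P ω) ∧ ∑ ω, P ω = 1

/-- `-t log₂ t` (with the convention `0 log 0 = 0`). -/
def nlog (t : ℝ) : ℝ := - (t * Real.logb 2 t)

/-- Shannon entropy (base 2) of a random variable `X` on `(Ω, P)`. -/
def ent {Ω α : Type} [Fintype Ω] [Fintype α] (P : Ω → ℝ) (X : Ω → α) : ℝ :=
  ∑ x, nlog (pr P (fun ω => X ω = x))

/-- Conditional Shannon entropy `H(X|Y) = H(X,Y) - H(Y)`. -/
def condEnt {Ω α β : Type} [Fintype Ω] [Fintype α] [Fintype β]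
    (P : Ω → ℝ) (X : Ω → α) (Y : Ω → β) : ℝ :=
  ent P (fun ω => (X ω, Y ω)) - ent P Y

/-- Mutual information `I(X;Y) = H(X) - H(X|Y)`. -/
def mi {Ω α β : Type} [Fintype Ω] [Fintype α] [Fintype β]
    (P : Ω → ℝ) (X : Ω → α) (Y : Ω → β) : ℝ :=
  ent P X - condEnt P X Y

/-- Conditional mutual information `I(X;Y|Z) = H(X|Z) - H(X|Y,Z)`. -/
def condMI {Ω α β γ : Type} [Fintype Ω] [Fintype α] [Fintype β] [Fintype γ]
    (P : Ω → ℝ) (X : Ω → α) (Y : Ω → β) (Z : Ω → γ) : ℝ :=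
  condEnt P X Z - condEnt P X (fun ω => (Y ω, Z ω))

/-- Binary entropy function. -/
def binEnt (a : ℝ) : ℝ := nlog a + nlog (1 - a)


/-!
Erasing `X` with probability `p`, independently of `W` given `X`, splits the pair `(Y, W)`
into the event `Y = none`, which carries a copy of `W` with weight `p`, and the event that
`Y = some X`, which carries a copy of `(X, W)` with weight `1 - p`. Hence
`H(Y|W) = h(p) + (1 - p) H(X|W)`. For binary `X`, grouping the two fibres over each `w`
writes `H(X|W)` as an average of binary entropies of the conditional error probabilities of
`f`, and concavity (Jensen) plus monotonicity of `h` on `[0, 1/2]` bound it by `h(D₁)`.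
-/

section Pr

variable {Ω : Type} [Fintype Ω] {P : Ω → ℝ}

lemma pr_nonneg (hP : ∀ ω, 0 ≤ P ω) (A : Ω → Prop) : 0 ≤ pr P A :=
  Finset.sum_nonneg fun ω _ => by split_ifs <;> simp [hP ω]

lemma pr_congr {A B : Ω → Prop} (h : ∀ ω, A ω ↔ B ω) : pr P A = pr P B := by
  simp only [pr, h]

lemma pr_mono (hP : ∀ ω, 0 ≤ P ω) {A B : Ω → Prop} (h : ∀ ω, A ω → B ω) :
    pr P A ≤ pr P B :=
  Finset.sum_le_sum fun ω _ => by
    by_cases hA : A ω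
    · simp [hA, h ω hA]
    · by_cases hB : B ω <;> simp [hA, hB, hP ω]

lemma pr_eq_zero_of_imp (hP : ∀ ω, 0 ≤ P ω) {A B : Ω → Prop} (hB : pr P B = 0)
    (h : ∀ ω, A ω → B ω) : pr P A = 0 :=
  le_antisymm (hB ▸ pr_mono hP h) (pr_nonneg hP A)

lemma pr_eq_pr_and_add_pr_and_not (A C : Ω → Prop) :
    pr P A = pr P (fun ω => A ω ∧ C ω) + pr P (fun ω => A ω ∧ ¬ C ω) := by
  simp only [pr, ← Finset.sum_add_distrib]
  refine Finset.sum_congr rfl fun ω _ => ?_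
  by_cases hA : A ω <;> by_cases hC : C ω <;> simp [hA, hC]

lemma pr_eq_sum_pr_and_eq {α : Type} [Fintype α] (A : Ω → Prop) (Z : Ω → α) :
    pr P A = ∑ x, pr P (fun ω => A ω ∧ Z ω = x) := by
  simp only [pr]
  rw [Finset.sum_comm]
  refine Finset.sum_congr rfl fun ω _ => ?_
  by_cases hA : A ω <;> simp [hA]

lemma sum_pr_eq_one {α : Type} [Fintype α] (hP : ∑ ω, P ω = 1) (Z : Ω → α) :
    ∑ x, pr P (fun ω => Z ω = x) = 1 := by
  simp only [pr]
  rw [Finset.sum_comm, ← hP]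
  simp

end Pr

section BinaryEntropy

lemma nlog_mul {x y : ℝ} (hx : 0 ≤ x) (hy : 0 ≤ y) :
    nlog (x * y) = x * nlog y + y * nlog x := by
  rcases hx.eq_or_lt with rfl | hx
  · simp [nlog]
  rcases hy.eq_or_lt with rfl | hy
  · simp [nlog]
  simp only [nlog, Real.logb, Real.log_mul hx.ne' hy.ne']
  ring

lemma binEnt_eq_binEntropy_div (a : ℝ) : binEnt a = Real.binEntropy a / Real.log 2 := by
  simp only [binEnt, nlog, Real.logb, Real.binEntropy_eq_negMulLog_add_negMulLog_one_sub,
    Real.negMulLog]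
  ring

lemma binEnt_concaveOn : ConcaveOn ℝ (Set.Icc 0 1) binEnt := by
  have hfun : binEnt = fun a => (Real.log 2)⁻¹ • Real.binEntropy a := by
    ext a
    rw [binEnt_eq_binEntropy_div, smul_eq_mul, inv_mul_eq_div]
  rw [hfun]
  exact Real.strictConcave_binEntropy.concaveOn.smul (by positivity)

lemma binEnt_le_binEnt {a b : ℝ} (ha : 0 ≤ a) (hab : a ≤ b) (hb : b ≤ 1 / 2) :
    binEnt a ≤ binEnt b := by
  rw [binEnt_eq_binEntropy_div, binEnt_eq_binEntropy_div]
  have hlog2 : 0 < Real.log 2 := Real.log_pos one_lt_two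
  gcongr
  exact Real.binEntropy_strictMonoOn.monotoneOn ⟨ha, by linarith⟩ ⟨ha.trans hab, by linarith⟩ hab

/-- The grouping rule of entropy for two masses `u` and `v`. -/
lemma add_mul_binEnt_div_add {u v : ℝ} (hu : 0 ≤ u) (hv : 0 ≤ v) :
    (u + v) * binEnt (v / (u + v)) = nlog u + nlog v - nlog (u + v) := by
  rcases (add_nonneg hu hv).eq_or_lt with h | h
  · obtain ⟨rfl, rfl⟩ : u = 0 ∧ v = 0 := ⟨by linarith, by linarith⟩
    simp [nlog]
  set t := v / (u + v)
  have ht0 : 0 ≤ t := by positivity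
  have ht1 : 0 ≤ 1 - t := by
    rw [sub_nonneg, div_le_one h]; linarith
  have hvt : (u + v) * t = v := mul_div_cancel₀ v h.ne'
  have hu' : nlog u = (u + v) * nlog (1 - t) + (1 - t) * nlog (u + v) := by
    rw [← nlog_mul h.le ht1]; congr 1; linear_combination hvt
  have hv' : nlog v = (u + v) * nlog t + t * nlog (u + v) := by
    rw [← nlog_mul h.le ht0, hvt]
  rw [hu', hv', binEnt]
  ring

end BinaryEntropy

section Entropy

variable {Ω α γ : Type} [Fintype Ω] [Fintype α] [Fintype γ] {P : Ω → ℝ}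

lemma sum_nlog_mul_pr {c : ℝ} (hc : 0 ≤ c) (hP : IsPMF P) (Z : Ω → α) :
    ∑ z, nlog (c * pr P (fun ω => Z ω = z)) = c * ent P Z + nlog c := by
  simp only [nlog_mul hc (pr_nonneg hP.1 _), Finset.sum_add_distrib, ← Finset.mul_sum,
    ← Finset.sum_mul, sum_pr_eq_one hP.2, one_mul, ent]

lemma ent_pair (X : Ω → α) (W : Ω → γ) :
    ent P (fun ω => (X ω, W ω)) = ∑ w, ∑ x, nlog (pr P (fun ω => X ω = x ∧ W ω = w)) := by
  simp only [ent, Fintype.sum_prod_type_right, Prod.mk.injEq]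

end Entropy

section Erasure

variable {Ω α γ : Type} [Fintype Ω] {P : Ω → ℝ}
  {X : Ω → α} {Y : Ω → Option α} {W : Ω → γ} {p : ℝ}

lemma pr_and_none_and_eq_of_markov (hP : ∀ ω, 0 ≤ P ω)
    (hind : ∀ x, pr P (fun ω => Y ω = none ∧ X ω = x) = p * pr P (fun ω => X ω = x))
    (hMarkov : ∀ x w, pr P (fun ω => X ω = x ∧ Y ω = none ∧ W ω = w) * pr P (fun ω => X ω = x)
      = pr P (fun ω => X ω = x ∧ Y ω = none) * pr P (fun ω => X ω = x ∧ W ω = w))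
    (x : α) (w : γ) :
    pr P (fun ω => X ω = x ∧ Y ω = none ∧ W ω = w) = p * pr P (fun ω => X ω = x ∧ W ω = w) := by
  by_cases h0 : pr P (fun ω => X ω = x) = 0
  · rw [pr_eq_zero_of_imp hP h0 fun ω h => h.1, pr_eq_zero_of_imp hP h0 fun ω h => h.1,
      mul_zero]
  · apply mul_right_cancel₀ h0
    rw [hMarkov, pr_congr (B := fun ω => Y ω = none ∧ X ω = x) fun ω => and_comm, hind]
    ring

lemma pr_none_and_eq [Fintype α]
    (herase : ∀ x w, pr P (fun ω => X ω = x ∧ Y ω = none ∧ W ω = w)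
      = p * pr P (fun ω => X ω = x ∧ W ω = w)) (w : γ) :
    pr P (fun ω => Y ω = none ∧ W ω = w) = p * pr P (fun ω => W ω = w) := by
  rw [pr_eq_sum_pr_and_eq (fun ω => Y ω = none ∧ W ω = w) X,
    pr_eq_sum_pr_and_eq (fun ω => W ω = w) X, Finset.mul_sum]
  refine Finset.sum_congr rfl fun x _ => ?_
  rw [pr_congr (B := fun ω => X ω = x ∧ Y ω = none ∧ W ω = w) fun ω => by tauto, herase,
    pr_congr (B := fun ω => X ω = x ∧ W ω = w) fun ω => and_comm]

lemma pr_some_and_eq (hstruct : ∀ ω, Y ω = some (X ω) ∨ Y ω = none)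
    (herase : ∀ x w, pr P (fun ω => X ω = x ∧ Y ω = none ∧ W ω = w)
      = p * pr P (fun ω => X ω = x ∧ W ω = w)) (x : α) (w : γ) :
    pr P (fun ω => Y ω = some x ∧ W ω = w) = (1 - p) * pr P (fun ω => X ω = x ∧ W ω = w) := by
  have hsplit := pr_eq_pr_and_add_pr_and_not (P := P) (fun ω => X ω = x ∧ W ω = w)
    (fun ω => Y ω = none)
  have herased : pr P (fun ω => (X ω = x ∧ W ω = w) ∧ Y ω = none)
      = p * pr P (fun ω => X ω = x ∧ W ω = w) := by
    rw [← herase]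
    exact pr_congr fun ω => by tauto
  have hkept : pr P (fun ω => Y ω = some x ∧ W ω = w)
      = pr P (fun ω => (X ω = x ∧ W ω = w) ∧ ¬ Y ω = none) :=
    pr_congr fun ω => by rcases hstruct ω with h | h <;> simp [h]
  linarith

theorem condEnt_erasure [Fintype α] [Fintype γ] (hP : IsPMF P) (hp0 : 0 ≤ p) (hp1 : p ≤ 1)
    (hstruct : ∀ ω, Y ω = some (X ω) ∨ Y ω = none)
    (herase : ∀ x w, pr P (fun ω => X ω = x ∧ Y ω = none ∧ W ω = w)
      = p * pr P (fun ω => X ω = x ∧ W ω = w)) :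
    condEnt P Y W = binEnt p + (1 - p) * condEnt P X W := by
  have hYW : ent P (fun ω => (Y ω, W ω)) = ∑ w, nlog (p * pr P (fun ω => W ω = w))
      + ∑ x, ∑ w, nlog ((1 - p) * pr P (fun ω => X ω = x ∧ W ω = w)) := by
    rw [ent, Fintype.sum_prod_type, Fintype.sum_option]
    simp only [Prod.mk.injEq, pr_none_and_eq herase, pr_some_and_eq hstruct herase]
  have hXW : ∑ x, ∑ w, nlog ((1 - p) * pr P (fun ω => X ω = x ∧ W ω = w))
      = (1 - p) * ent P (fun ω => (X ω, W ω)) + nlog (1 - p) := by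
    rw [← sum_nlog_mul_pr (by linarith) hP, Fintype.sum_prod_type]
    simp only [Prod.mk.injEq]
  rw [condEnt, condEnt, hYW, hXW, sum_nlog_mul_pr hp0 hP, binEnt]
  ring

end Erasure

section Fano

variable {Ω γ : Type} [Fintype Ω] {P : Ω → ℝ}

lemma sum_nlog_pr_and_sub_nlog_pr_eq_mul_binEnt (hP : ∀ ω, 0 ≤ P ω) (X : Ω → Bool)
    (W : Ω → γ) (b : Bool) (w : γ) :
    ∑ x, nlog (pr P (fun ω => X ω = x ∧ W ω = w)) - nlog (pr P (fun ω => W ω = w))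
      = pr P (fun ω => W ω = w)
        * binEnt (pr P (fun ω => X ω ≠ b ∧ W ω = w) / pr P (fun ω => W ω = w)) := by
  have hW : pr P (fun ω => W ω = w)
      = pr P (fun ω => X ω = b ∧ W ω = w) + pr P (fun ω => X ω ≠ b ∧ W ω = w) := by
    rw [pr_eq_pr_and_add_pr_and_not (fun ω => W ω = w) (fun ω => X ω = b)]
    congr 1 <;> exact pr_congr fun ω => and_comm
  have hsum : ∑ x, nlog (pr P (fun ω => X ω = x ∧ W ω = w))
      = nlog (pr P (fun ω => X ω = b ∧ W ω = w)) + nlog (pr P (fun ω => X ω ≠ b ∧ W ω = w)) := by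
    cases b <;> simp [add_comm]
  rw [hsum, hW, add_mul_binEnt_div_add (pr_nonneg hP _) (pr_nonneg hP _)]

theorem condEnt_le_binEnt_pr_ne [Fintype γ] (hP : IsPMF P) (X : Ω → Bool) (W : Ω → γ) (f : γ → Bool) :
    condEnt P X W ≤ binEnt (pr P (fun ω => X ω ≠ f (W ω))) := by
  set q := fun w => pr P (fun ω => W ω = w)
  set m := fun w => pr P (fun ω => X ω ≠ f w ∧ W ω = w)
  have hm_le : ∀ w, m w ≤ q w := fun w => pr_mono hP.1 fun ω h => h.2
  have hcond : condEnt P X W = ∑ w, q w * binEnt (m w / q w) := by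
    rw [condEnt, ent_pair, ent, ← Finset.sum_sub_distrib]
    exact Finset.sum_congr rfl fun w _ => sum_nlog_pr_and_sub_nlog_pr_eq_mul_binEnt hP.1 X W (f w) w
  have hmean : ∑ w, q w * (m w / q w) = pr P (fun ω => X ω ≠ f (W ω)) := by
    rw [pr_eq_sum_pr_and_eq _ W]
    refine Finset.sum_congr rfl fun w _ => ?_
    rw [mul_div_cancel_of_imp' fun h => le_antisymm (h ▸ hm_le w) (pr_nonneg hP.1 _)]
    exact pr_congr fun ω => by constructor <;> rintro ⟨h, rfl⟩ <;> exact ⟨h, rfl⟩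
  rw [hcond, ← hmean]
  simpa using binEnt_concaveOn.le_map_sum (t := Finset.univ) (fun w _ => pr_nonneg hP.1 _)
    (sum_pr_eq_one hP.2 W)
    (fun w _ => ⟨div_nonneg (pr_nonneg hP.1 _) (pr_nonneg hP.1 _),
      div_le_one_of_le₀ (hm_le w) (pr_nonneg hP.1 _)⟩)

end Fano

theorem stmt3_general {Ω γ : Type} [Fintype Ω] [Fintype γ] (P : Ω → ℝ) (hP : IsPMF P)
    (X : Ω → Bool) (Y : Ω → Option Bool) (W : Ω → γ) (f : γ → Bool)
    (p D₁ : ℝ) (hp0 : 0 ≤ p) (hp1 : p ≤ 1)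
    (hstruct : ∀ ω, Y ω = some (X ω) ∨ Y ω = none)
    (hind : ∀ b, pr P (fun ω => Y ω = none ∧ X ω = b) = p * pr P (fun ω => X ω = b))
    (hMarkov : ∀ (x : Bool) (y : Option Bool) (w : γ),
      pr P (fun ω => X ω = x ∧ Y ω = y ∧ W ω = w) * pr P (fun ω => X ω = x)
        = pr P (fun ω => X ω = x ∧ Y ω = y) * pr P (fun ω => X ω = x ∧ W ω = w))
    (hDhalf : D₁ ≤ 1/2)
    (hdist : pr P (fun ω => X ω ≠ f (W ω)) ≤ D₁) :
    condEnt P Y W ≤ binEnt p + (1 - p) * binEnt D₁ := by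
  have herase := pr_and_none_and_eq_of_markov hP.1 hind fun x w => hMarkov x none w
  have hfano : condEnt P X W ≤ binEnt D₁ :=
    (condEnt_le_binEnt_pr_ne hP X W f).trans (binEnt_le_binEnt (pr_nonneg hP.1 _) hdist hDhalf)
  rw [condEnt_erasure hP hp0 hp1 hstruct herase]
  gcongr

/-- For `X` uniform, `Y` its erasure with probability `p`, `W - X - Y` a Markov chain,
and `X̂₁ = f(W)` with `P(X ≠ X̂₁) ≤ D₁ ≤ 1/2`, we have `H(Y|W) ≤ h(p) + (1-p)h(D₁)`. -/
theorem stmt3 {Ω γ : Type} [Fintype Ω] [Fintype γ] (P : Ω → ℝ) (hP : IsPMF P)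
    (X : Ω → Bool) (Y : Ω → Option Bool) (W : Ω → γ) (f : γ → Bool)
    (p D₁ : ℝ) (hp0 : 0 ≤ p) (hp1 : p ≤ 1)
    (hX : ∀ b, pr P (fun ω => X ω = b) = 1/2)
    (hstruct : ∀ ω, Y ω = some (X ω) ∨ Y ω = none)
    (hind : ∀ b, pr P (fun ω => Y ω = none ∧ X ω = b) = p * pr P (fun ω => X ω = b))
    (hMarkov : ∀ (x : Bool) (y : Option Bool) (w : γ),
      pr P (fun ω => X ω = x ∧ Y ω = y ∧ W ω = w) * pr P (fun ω => X ω = x)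
        = pr P (fun ω => X ω = x ∧ Y ω = y) * pr P (fun ω => X ω = x ∧ W ω = w))
    (hD0 : 0 ≤ D₁) (hDhalf : D₁ ≤ 1/2)
    (hdist : pr P (fun ω => X ω ≠ f (W ω)) ≤ D₁) :
    condEnt P Y W ≤ binEnt p + (1 - p) * binEnt D₁ :=
  stmt3_general P hP X Y W f p D₁ hp0 hp1 hstruct hind hMarkov hDhalf hdist
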